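/- arXiv:2110.12198 — 6 statements merged into one kernel-verified Lean document; each statement's English description precedes it below -/
import Mathlib

section
/- Let ρ : X → ℝ be a cash-subadditive risk measure. For each Z ∈ X, the functional ρ_Z(X) := ρ(Z + ess-sup(X − Z)) is a monotone, cash-subadditive and quasi-convex functional on X, and ρ(X) = min_{Z ∈ X} ρ_Z(X). Consequently every cash-subadditive risk measure is the pointwise minimum of a family of quasi-convex cash-subadditive risk measures. -/
open MeasureTheory ENNReal

variable {Ω : Type*} [MeasurableSpace Ω]

noncomputable def cst (μ : Measure Ω) [IsFiniteMeasure μ] (c : ℝ) : Lp ℝ ⊤ μ :=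
  Lp.const ⊤ μ c

noncomputable def esssup (μ : Measure Ω) [IsFiniteMeasure μ] (X : Lp ℝ ⊤ μ) : ℝ :=
  sInf {c : ℝ | X ≤ cst μ c}

noncomputable def rhoZ (μ : Measure Ω) [IsFiniteMeasure μ]
    (ρ : Lp ℝ ⊤ μ → ℝ) (Z X : Lp ℝ ⊤ μ) : ℝ :=
  ρ (Z + cst μ (esssup μ (X - Z)))

section Aux

variable (μ : Measure Ω) [IsProbabilityMeasure μ]

lemma ae_norm_le (X : Lp ℝ ⊤ μ) : ∀ᵐ ω ∂μ, ‖X ω‖ ≤ ‖X‖ := by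
  have h := ae_le_eLpNormEssSup (f := ⇑X) (μ := μ)
  have hlt : eLpNormEssSup (⇑X) μ < ⊤ := by
    have := Lp.eLpNorm_lt_top X
    rwa [eLpNorm_exponent_top] at this
  filter_upwards [h] with ω hω
  have : (‖X ω‖₊ : ℝ≥0∞).toReal ≤ (eLpNormEssSup (⇑X) μ).toReal :=
    ENNReal.toReal_mono hlt.ne hω
  simpa [Lp.norm_def, eLpNorm_exponent_top] using this

lemma le_cst_iff (X : Lp ℝ ⊤ μ) (c : ℝ) : X ≤ cst μ c ↔ ∀ᵐ ω ∂μ, X ω ≤ c := by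
  rw [← Lp.coeFn_le]
  have hc : (cst μ c : Ω → ℝ) =ᵐ[μ] fun _ => c := Lp.coeFn_const ⊤ μ c
  constructor
  · intro h
    filter_upwards [h, hc] with ω h1 h2
    rw [h2] at h1; exact h1
  · intro h
    filter_upwards [h, hc] with ω h1 h2
    rw [h2]; exact h1

lemma cst_le_iff (X : Lp ℝ ⊤ μ) (c : ℝ) : cst μ c ≤ X ↔ ∀ᵐ ω ∂μ, c ≤ X ω := by
  rw [← Lp.coeFn_le]
  have hc : (cst μ c : Ω → ℝ) =ᵐ[μ] fun _ => c := Lp.coeFn_const ⊤ μ c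
  constructor
  · intro h
    filter_upwards [h, hc] with ω h1 h2
    rw [h2] at h1; exact h1
  · intro h
    filter_upwards [h, hc] with ω h1 h2
    rw [h2]; exact h1

lemma mem_S (X : Lp ℝ ⊤ μ) : ‖X‖ ∈ {c : ℝ | X ≤ cst μ c} := by
  rw [Set.mem_setOf_eq, le_cst_iff]
  filter_upwards [ae_norm_le μ X] with ω hω
  exact (le_abs_self _).trans (by simpa [Real.norm_eq_abs] using hω)

lemma bddBelow_S (X : Lp ℝ ⊤ μ) : BddBelow {c : ℝ | X ≤ cst μ c} := by
  refine ⟨-‖X‖, fun c hc => ?_⟩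
  rw [Set.mem_setOf_eq, le_cst_iff] at hc
  have h2 := ae_norm_le μ X
  have : ∀ᵐ ω ∂μ, -‖X‖ ≤ c := by
    filter_upwards [hc, h2] with ω h1 h3
    have : -‖X‖ ≤ X ω := by
      rw [Real.norm_eq_abs] at h3
      linarith [neg_abs_le (X ω)]
    linarith
  have hne : (MeasureTheory.ae μ).NeBot := ae_neBot.mpr (IsProbabilityMeasure.ne_zero μ)
  exact this.exists.choose_spec

lemma nonempty_S (X : Lp ℝ ⊤ μ) : {c : ℝ | X ≤ cst μ c}.Nonempty := ⟨‖X‖, mem_S μ X⟩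

lemma le_cst_esssup (X : Lp ℝ ⊤ μ) : X ≤ cst μ (esssup μ X) := by
  rw [le_cst_iff]
  have hchoice : ∀ n : ℕ, ∃ c ∈ {c : ℝ | X ≤ cst μ c}, c < esssup μ X + 1 / (n + 1) := by
    intro n
    exact Real.lt_sInf_add_pos (nonempty_S μ X) (by positivity)
  choose c hcS hclt using hchoice
  have hae : ∀ᵐ ω ∂μ, ∀ n : ℕ, X ω ≤ c n := by
    rw [MeasureTheory.ae_all_iff]
    intro n
    exact (le_cst_iff μ X (c n)).mp (hcS n)
  filter_upwards [hae] with ω hω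
  refine le_of_forall_pos_le_add fun ε hε => ?_
  obtain ⟨n, hn⟩ := exists_nat_one_div_lt hε
  calc X ω ≤ c n := hω n
    _ ≤ esssup μ X + 1 / (n + 1) := (hclt n).le
    _ ≤ esssup μ X + ε := by linarith
  
lemma esssup_le {X : Lp ℝ ⊤ μ} {c : ℝ} (h : X ≤ cst μ c) : esssup μ X ≤ c :=
  csInf_le (bddBelow_S μ X) h

lemma esssup_mono {X Y : Lp ℝ ⊤ μ} (h : X ≤ Y) : esssup μ X ≤ esssup μ Y :=
  esssup_le μ (h.trans (le_cst_esssup μ Y))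

lemma cst_mono {a b : ℝ} (h : a ≤ b) : cst μ a ≤ cst μ b := by
  rw [le_cst_iff]
  have hc : (cst μ a : Ω → ℝ) =ᵐ[μ] fun _ => a := Lp.coeFn_const ⊤ μ a
  filter_upwards [hc] with ω hω
  rw [hω]; exact h

lemma cst_add (a b : ℝ) : cst μ (a + b) = cst μ a + cst μ b :=
  map_add (Lp.const ⊤ μ) a b

lemma cst_zero : cst μ (0 : ℝ) = 0 := map_zero (Lp.const ⊤ μ : ℝ →+ Lp ℝ ⊤ μ)

lemma esssup_add_cst (X : Lp ℝ ⊤ μ) (m : ℝ) :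
    esssup μ (X + cst μ m) ≤ esssup μ X + m := by
  apply esssup_le
  rw [cst_add]
  exact add_le_add_left (le_cst_esssup μ X) _

lemma esssup_zero : esssup μ (0 : Lp ℝ ⊤ μ) = 0 := by
  have hne : (MeasureTheory.ae μ).NeBot := ae_neBot.mpr (IsProbabilityMeasure.ne_zero μ)
  apply le_antisymm
  · apply esssup_le
    rw [le_cst_iff]
    filter_upwards [Lp.coeFn_zero ℝ ⊤ μ] with ω hω
    simp [hω]
  · apply le_csInf (nonempty_S μ 0)
    intro c hc
    rw [Set.mem_setOf_eq, le_cst_iff] at hc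
    have : ∀ᵐ ω ∂μ, (0 : ℝ) ≤ c := by
      filter_upwards [hc, Lp.coeFn_zero ℝ ⊤ μ] with ω h1 h2
      rw [h2] at h1; exact h1
    exact this.exists.choose_spec

end Aux

/-- For a cash-subadditive risk measure `ρ`, each `ρ_Z(X) = ρ(Z + ess-sup(X-Z))`
is a monotone, cash-subadditive and quasi-convex functional, and
`ρ(X) = min_Z ρ_Z(X)` (attained at `Z = X`): every cash-subadditive risk measure
is the pointwise minimum of a family of quasi-convex cash-subadditive risk measures. -/
theorem cashSubadditive_repr_quasiConvex (μ : Measure Ω) [IsProbabilityMeasure μ]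
    (ρ : Lp ℝ ⊤ μ → ℝ)
    (hmono : ∀ U V : Lp ℝ ⊤ μ, U ≤ V → ρ U ≤ ρ V)
    (hcs : ∀ (U : Lp ℝ ⊤ μ) (m : ℝ), 0 ≤ m → ρ (U + cst μ m) ≤ ρ U + m) :
    (∀ Z : Lp ℝ ⊤ μ,
      (∀ U V : Lp ℝ ⊤ μ, U ≤ V → rhoZ μ ρ Z U ≤ rhoZ μ ρ Z V) ∧
      (∀ (U : Lp ℝ ⊤ μ) (m : ℝ), 0 ≤ m → rhoZ μ ρ Z (U + cst μ m) ≤ rhoZ μ ρ Z U + m) ∧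
      (∀ (U V : Lp ℝ ⊤ μ) (l : ℝ), 0 ≤ l → l ≤ 1 →
        rhoZ μ ρ Z (l • U + (1 - l) • V) ≤ max (rhoZ μ ρ Z U) (rhoZ μ ρ Z V))) ∧
    (∀ X : Lp ℝ ⊤ μ, rhoZ μ ρ X X = ρ X ∧ ∀ Z : Lp ℝ ⊤ μ, ρ X ≤ rhoZ μ ρ Z X) := by
  have key : ∀ (Z : Lp ℝ ⊤ μ) {a b : ℝ}, a ≤ b →
      ρ (Z + cst μ a) ≤ ρ (Z + cst μ b) := fun Z a b h =>
    hmono _ _ (add_le_add_right (cst_mono μ h) Z)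
  constructor
  · intro Z
    refine ⟨fun U V h => ?_, fun U m hm => ?_, fun U V l hl0 hl1 => ?_⟩
    · exact key Z (esssup_mono μ (sub_le_sub_right h Z))
    · -- cash subadditivity
      unfold rhoZ
      have h1 : esssup μ (U + cst μ m - Z) ≤ esssup μ (U - Z) + m := by
        have : U + cst μ m - Z = (U - Z) + cst μ m := by abel
        rw [this]
        exact esssup_add_cst μ _ m
      calc ρ (Z + cst μ (esssup μ (U + cst μ m - Z)))
          ≤ ρ (Z + cst μ (esssup μ (U - Z) + m)) := key Z h1
        _ = ρ (Z + cst μ (esssup μ (U - Z)) + cst μ m) := by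
            rw [cst_add, add_assoc]
        _ ≤ ρ (Z + cst μ (esssup μ (U - Z))) + m := hcs _ m hm
    · -- quasi convexity
      set a := esssup μ (U - Z)
      set b := esssup μ (V - Z)
      have hconv : esssup μ (l • U + (1 - l) • V - Z) ≤ max a b := by
        apply esssup_le
        rw [le_cst_iff]
        have hU : ∀ᵐ ω ∂μ, (U : Ω → ℝ) ω - (Z : Ω → ℝ) ω ≤ max a b := by
          have := (le_cst_iff μ (U - Z) (max a b)).mp
            ((le_cst_esssup μ (U - Z)).trans (cst_mono μ (le_max_left a b)))
          filter_upwards [this, Lp.coeFn_sub U Z] with ω h1 h2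
          rw [h2] at h1; exact h1
        have hV : ∀ᵐ ω ∂μ, (V : Ω → ℝ) ω - (Z : Ω → ℝ) ω ≤ max a b := by
          have := (le_cst_iff μ (V - Z) (max a b)).mp
            ((le_cst_esssup μ (V - Z)).trans (cst_mono μ (le_max_right a b)))
          filter_upwards [this, Lp.coeFn_sub V Z] with ω h1 h2
          rw [h2] at h1; exact h1
        filter_upwards [hU, hV, Lp.coeFn_sub (l • U + (1 - l) • V) Z,
          Lp.coeFn_add (l • U) ((1 - l) • V), Lp.coeFn_smul l U,
          Lp.coeFn_smul (1 - l) V] with ω h1 h2 h3 h4 h5 h6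
        rw [h3]
        simp only [Pi.sub_apply, h4, Pi.add_apply, h5, h6, Pi.smul_apply, smul_eq_mul]
        have := add_le_add (mul_le_mul_of_nonneg_left (by linarith : (U : Ω → ℝ) ω ≤ max a b + (Z : Ω → ℝ) ω) hl0)
          (mul_le_mul_of_nonneg_left (by linarith : (V : Ω → ℝ) ω ≤ max a b + (Z : Ω → ℝ) ω) (by linarith : 0 ≤ 1 - l))
        nlinarith
      calc rhoZ μ ρ Z (l • U + (1 - l) • V)
          ≤ ρ (Z + cst μ (max a b)) := key Z hconv
        _ ≤ max (rhoZ μ ρ Z U) (rhoZ μ ρ Z V) := by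
            unfold rhoZ
            rcases max_cases a b with ⟨h, _⟩ | ⟨h, _⟩
            · rw [h]; exact le_max_left _ _
            · rw [h]; exact le_max_right _ _
  · intro X
    constructor
    · unfold rhoZ
      rw [sub_self, esssup_zero, cst_zero, add_zero]
    · intro Z
      apply hmono
      have h := le_cst_esssup μ (X - Z)
      calc X = (X - Z) + Z := by abel
        _ ≤ cst μ (esssup μ (X - Z)) + Z := add_le_add_left h Z
        _ = Z + cst μ (esssup μ (X - Z)) := by abel
end

section
/- Let Λ : ℝ → [0,1] be decreasing and not identically 0, and define ΛVaR(X) = inf{x ∈ ℝ : P(X ≤ x) ≥ Λ(x)} for bounded X. Then ΛVaR(X) = inf_{x ∈ ℝ} (VaR_{Λ(x)}(X) ∨ x) = sup_{x ∈ ℝ} (VaR_{Λ(x)}(X) ∧ x), where VaR_t(X) = inf{y ∈ ℝ : P(X ≤ y) ≥ t} for t ∈ (0,1], and VaR_0(X) := −∞. -/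
/-!
Write `F(y) = P(X ≤ y)` and `S = {x | Λ x ≤ F x}`, so that `ΛVaR(X) = inf S =: ℓ`. Since `F`
increases and `Λ` decreases, `S` is an upper set, and `g x = VaR_{Λ x}(X)` crosses `ℓ` at `ℓ`:
`g x ≥ ℓ` for `x < ℓ`, because then `x ∉ S` and every `y` with `F y ≥ Λ x` lies in `S`; and
`g x ≤ ℓ` for `x > ℓ`, because every point of `S ∩ (−∞, x]` is admissible for `VaR_{Λ x}`.
Any function crossing `ℓ` at `ℓ` satisfies `inf_x (g x ∨ x) = sup_x (g x ∧ x) = ℓ`.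
-/

open MeasureTheory

variable {Ω : Type*} [MeasurableSpace Ω]

/-- Value-at-Risk at level `t`, as an extended real: the left `t`-quantile for
`t > 0`, and `−∞` for `t ≤ 0` (so `VaR_0 = −∞` by convention). -/
noncomputable def VaRe (μ : Measure Ω) (t : ℝ) (X : Ω → ℝ) : EReal :=
  if 0 < t then ((sInf {y : ℝ | t ≤ (μ {ω | X ω ≤ y}).toReal} : ℝ) : EReal) else ⊥

/-- `ΛVaR(X) = inf {x ∈ ℝ : P(X ≤ x) ≥ Λ(x)}`. -/
noncomputable def LVaR (μ : Measure Ω) (Λ : ℝ → ℝ) (X : Ω → ℝ) : ℝ :=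
  sInf {x : ℝ | Λ x ≤ (μ {ω | X ω ≤ x}).toReal}

namespace EReal

variable {g : ℝ → EReal} {ℓ : ℝ}

theorem iInf_max_coe_eq_of_crossing (hlt : ∀ x < ℓ, (ℓ : EReal) ≤ g x)
    (hgt : ∀ x, ℓ < x → g x ≤ ℓ) : ⨅ x : ℝ, max (g x) (x : EReal) = ℓ := by
  refine le_antisymm (le_of_forall_lt_iff_le.mp fun r hr => ?_) (le_iInf fun x => ?_)
  · have hgr : g r ≤ r := (hgt r (EReal.coe_lt_coe_iff.mp hr)).trans hr.le
    exact iInf_le_of_le r (max_le hgr le_rfl)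
  · rcases lt_or_ge x ℓ with hx | hx
    · exact (hlt x hx).trans (le_max_left _ _)
    · exact (EReal.coe_le_coe hx).trans (le_max_right _ _)

theorem iSup_min_coe_eq_of_crossing (hlt : ∀ x < ℓ, (ℓ : EReal) ≤ g x)
    (hgt : ∀ x, ℓ < x → g x ≤ ℓ) : ⨆ x : ℝ, min (g x) (x : EReal) = ℓ := by
  refine le_antisymm (iSup_le fun x => ?_) (ge_of_forall_gt_iff_ge.mp fun r hr => ?_)
  · rcases le_or_gt x ℓ with hx | hx
    · exact (min_le_right _ _).trans (EReal.coe_le_coe hx)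
    · exact (min_le_left _ _).trans (hgt x hx)
  · have hrg : (r : EReal) ≤ g r := hr.le.trans (hlt r (EReal.coe_lt_coe_iff.mp hr))
    exact le_iSup_of_le r (le_min hrg le_rfl)

end EReal

section Crossing

variable {F Λ : ℝ → ℝ}

theorem isUpperSet_setOf_antitone_le_monotone (hF : Monotone F) (hΛ : Antitone Λ) :
    IsUpperSet {z | Λ z ≤ F z} :=
  fun _ _ hxy hx => (hΛ hxy).trans (hx.trans (hF hxy))

theorem bddBelow_setOf_antitone_le (hΛ : Antitone Λ) {x₀ : ℝ}
    (h : BddBelow {y | Λ x₀ ≤ F y}) : BddBelow {z | Λ z ≤ F z} := by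
  refine (h.union (bddBelow_Ici (a := x₀))).mono fun z hz => ?_
  rcases le_total z x₀ with hzx | hxz
  · exact Or.inl ((hΛ hzx).trans hz)
  · exact Or.inr hxz

theorem setOf_le_subset_of_lt (hF : Monotone F) (hΛ : Antitone Λ) {x : ℝ} (hx : F x < Λ x) :
    {y | Λ x ≤ F y} ⊆ {z | Λ z ≤ F z} := by
  intro y hy
  rcases le_or_gt x y with hxy | hyx
  · exact (hΛ hxy).trans hy
  · exact absurd (hy.trans (hF hyx.le)) (not_le.mpr hx)

theorem csInf_le_csInf_setOf_le_of_lt (hF : Monotone F) (hΛ : Antitone Λ)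
    (hbdd : BddBelow {z | Λ z ≤ F z}) {x : ℝ} (hne : ∃ y, Λ x ≤ F y) (hx : F x < Λ x) :
    sInf {z | Λ z ≤ F z} ≤ sInf {y | Λ x ≤ F y} :=
  csInf_le_csInf hbdd hne (setOf_le_subset_of_lt hF hΛ hx)

theorem csInf_setOf_le_le_csInf_of_csInf_lt (hF : Monotone F) (hΛ : Antitone Λ)
    (hne : {z | Λ z ≤ F z}.Nonempty) {x : ℝ} (hbdd : BddBelow {y | Λ x ≤ F y})
    (hx : sInf {z | Λ z ≤ F z} < x) :
    sInf {y | Λ x ≤ F y} ≤ sInf {z | Λ z ≤ F z} := by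
  refine le_of_forall_gt_imp_ge_of_dense fun y hy => ?_
  obtain ⟨s, hs, hsxy⟩ := exists_lt_of_csInf_lt hne (lt_min hx hy)
  have hmin : min x y ∈ {z | Λ z ≤ F z} :=
    isUpperSet_setOf_antitone_le_monotone hF hΛ hsxy.le hs
  exact (csInf_le hbdd ((hΛ (min_le_left x y)).trans hmin)).trans (min_le_right x y)

end Crossing

section Bounded

variable (μ : Measure Ω) {X : Ω → ℝ}

theorem monotone_toReal_measure_setOf_le [IsFiniteMeasure μ] :
    Monotone fun y => (μ {ω | X ω ≤ y}).toReal :=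
  fun _ _ hab => ENNReal.toReal_mono (measure_ne_top μ _)
    (measure_mono fun _ h => le_trans h hab)

theorem toReal_measure_setOf_le_eq_one [IsProbabilityMeasure μ] {y : ℝ} (hX : ∀ ω, X ω ≤ y) :
    (μ {ω | X ω ≤ y}).toReal = 1 := by
  simp [hX]

theorem bddBelow_setOf_le_toReal_measure {m : ℝ} (hX : ∀ ω, m ≤ X ω) {t : ℝ} (ht : 0 < t) :
    BddBelow {y | t ≤ (μ {ω | X ω ≤ y}).toReal} := by
  refine ⟨m, fun y hy => not_lt.mp fun hym => ht.not_ge ?_⟩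
  have hXy : ∀ ω, ¬X ω ≤ y := fun ω => not_le.mpr (hym.trans_le (hX ω))
  simpa [hXy] using hy

end Bounded

section LVaR

variable {μ : Measure Ω} [IsProbabilityMeasure μ] {Λ : ℝ → ℝ} {X : Ω → ℝ} {m M : ℝ}

theorem LVaR_le_VaRe_of_lt (hΛ : Antitone Λ) (hΛ1 : ∀ x, Λ x ≤ 1) {x₀ : ℝ} (hx₀ : 0 < Λ x₀)
    (hXm : ∀ ω, m ≤ X ω) (hXM : ∀ ω, X ω ≤ M) {x : ℝ} (hx : x < LVaR μ Λ X) :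
    (LVaR μ Λ X : EReal) ≤ VaRe μ (Λ x) X := by
  have hbdd := bddBelow_setOf_antitone_le hΛ (bddBelow_setOf_le_toReal_measure μ hXm hx₀)
  have hxS : x ∉ {z | Λ z ≤ (μ {ω | X ω ≤ z}).toReal} := notMem_of_lt_csInf hx hbdd
  have hFx : (μ {ω | X ω ≤ x}).toReal < Λ x := not_le.mp hxS
  rw [VaRe, if_pos (ENNReal.toReal_nonneg.trans_lt hFx)]
  exact EReal.coe_le_coe (csInf_le_csInf_setOf_le_of_lt (monotone_toReal_measure_setOf_le μ) hΛ
    hbdd ⟨M, (hΛ1 x).trans_eq (toReal_measure_setOf_le_eq_one μ hXM).symm⟩ hFx)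

theorem VaRe_le_LVaR_of_lt (hΛ : Antitone Λ) (hΛ1 : ∀ x, Λ x ≤ 1) (hXm : ∀ ω, m ≤ X ω)
    (hXM : ∀ ω, X ω ≤ M) {x : ℝ} (hx : LVaR μ Λ X < x) : VaRe μ (Λ x) X ≤ LVaR μ Λ X := by
  rw [VaRe]
  split_ifs with hpos
  · exact EReal.coe_le_coe (csInf_setOf_le_le_csInf_of_csInf_lt
      (monotone_toReal_measure_setOf_le μ) hΛ
      ⟨M, (hΛ1 M).trans_eq (toReal_measure_setOf_le_eq_one μ hXM).symm⟩
      (bddBelow_setOf_le_toReal_measure μ hXm hpos) hx)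
  · exact bot_le

end LVaR

theorem LVaR_repr_general (μ : Measure Ω) [IsProbabilityMeasure μ]
    (Λ : ℝ → ℝ) (hΛ : Antitone Λ) (hΛ01 : ∀ x, Λ x ∈ Set.Icc (0 : ℝ) 1)
    (hΛne : ∃ x, Λ x ≠ 0)
    (X : Ω → ℝ) (hb : ∃ M, ∀ ω, |X ω| ≤ M) :
    ((LVaR μ Λ X : EReal) = ⨅ x : ℝ, max (VaRe μ (Λ x) X) (x : EReal)) ∧
    ((LVaR μ Λ X : EReal) = ⨆ x : ℝ, min (VaRe μ (Λ x) X) (x : EReal)) := by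
  obtain ⟨M, hX⟩ := hb
  have hXm : ∀ ω, -M ≤ X ω := fun ω => neg_le_of_abs_le (hX ω)
  have hXM : ∀ ω, X ω ≤ M := fun ω => le_of_abs_le (hX ω)
  obtain ⟨x₀, hx₀⟩ := hΛne
  have hΛ1 : ∀ x, Λ x ≤ 1 := fun x => (hΛ01 x).2
  have hlt : ∀ x < LVaR μ Λ X, (LVaR μ Λ X : EReal) ≤ VaRe μ (Λ x) X :=
    fun _ => LVaR_le_VaRe_of_lt hΛ hΛ1 ((hΛ01 x₀).1.lt_of_ne' hx₀) hXm hXM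
  have hgt : ∀ x, LVaR μ Λ X < x → VaRe μ (Λ x) X ≤ LVaR μ Λ X :=
    fun _ => VaRe_le_LVaR_of_lt hΛ hΛ1 hXm hXM
  exact ⟨(EReal.iInf_max_coe_eq_of_crossing hlt hgt).symm,
    (EReal.iSup_min_coe_eq_of_crossing hlt hgt).symm⟩

/-- For a decreasing `Λ : ℝ → [0,1]` not identically `0` and bounded `X`:
`ΛVaR(X) = inf_x (VaR_{Λ(x)}(X) ∨ x) = sup_x (VaR_{Λ(x)}(X) ∧ x)`. -/
theorem LVaR_repr (μ : Measure Ω) [IsProbabilityMeasure μ]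
    (Λ : ℝ → ℝ) (hΛ : Antitone Λ) (hΛ01 : ∀ x, Λ x ∈ Set.Icc (0 : ℝ) 1)
    (hΛne : ∃ x, Λ x ≠ 0)
    (X : Ω → ℝ) (hX : Measurable X) (hb : ∃ M, ∀ ω, |X ω| ≤ M) :
    ((LVaR μ Λ X : EReal) = ⨅ x : ℝ, max (VaRe μ (Λ x) X) (x : EReal)) ∧
    ((LVaR μ Λ X : EReal) = ⨆ x : ℝ, min (VaRe μ (Λ x) X) (x : EReal)) :=
  LVaR_repr_general μ Λ hΛ hΛ01 hΛne X hb
end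

section
/- Let Λ : ℝ → [0,1] be decreasing and not constantly 0. Then ΛVaR, defined by ΛVaR(X) = inf{x ∈ ℝ : P(X ≤ x) ≥ Λ(x)}, is cash subadditive: ΛVaR(X + c) ≤ ΛVaR(X) + c for all c ≥ 0 and all bounded X. -/
/-!
Translating a position by cash `c` translates every threshold: if `P(X ≤ x) ≥ Λ(x)` then
`P(X + c ≤ x + c) = P(X ≤ x) ≥ Λ(x) ≥ Λ(x + c)` because `Λ` is decreasing and `c ≥ 0`.
So the acceptance set of `X + c` contains that of `X` shifted by `c`, and taking infima gives the
inequality. These are genuine infima rather than the junk `sInf` of an empty or unbounded set: an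
upper bound of `X` lies in the acceptance set of `X`, and `Λ > 0` somewhere bounds the acceptance set
of the bounded-below `X + c` from below.
-/

open MeasureTheory

variable {Ω : Type*} [MeasurableSpace Ω]

def acceptanceSet (μ : Measure Ω) (Λ : ℝ → ℝ) (X : Ω → ℝ) : Set ℝ :=
  {x : ℝ | Λ x ≤ (μ {ω | X ω ≤ x}).toReal}

section acceptanceSet

variable {μ : Measure Ω} {Λ : ℝ → ℝ} {X : Ω → ℝ}

theorem LVaR_eq_sInf_acceptanceSet : LVaR μ Λ X = sInf (acceptanceSet μ Λ X) := rfl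

theorem mem_acceptanceSet_of_forall_le [IsProbabilityMeasure μ] {x : ℝ} (hX : ∀ ω, X ω ≤ x)
    (hΛ : Λ x ≤ 1) : x ∈ acceptanceSet μ Λ X := by
  have huniv : {ω | X ω ≤ x} = Set.univ := Set.eq_univ_of_forall hX
  simpa [acceptanceSet, huniv] using hΛ

theorem bddBelow_acceptanceSet (hΛ : Antitone Λ) {x₀ m : ℝ} (hx₀ : 0 < Λ x₀)
    (hX : ∀ ω, m ≤ X ω) :
    BddBelow (acceptanceSet μ Λ X) := by
  refine ⟨min x₀ m, fun x hx => ?_⟩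
  by_contra! hlt
  have hempty : {ω | X ω ≤ x} = ∅ :=
    Set.eq_empty_of_forall_notMem fun ω hω => (hlt.trans_le (min_le_right _ _)).not_ge
      ((hX ω).trans hω)
  have hΛx : Λ x₀ ≤ Λ x := hΛ (hlt.le.trans (min_le_left _ _))
  have hΛx' : Λ x ≤ 0 := by simpa [acceptanceSet, hempty] using hx
  linarith

theorem add_mem_acceptanceSet_add (hΛ : Antitone Λ) {c x : ℝ} (hc : 0 ≤ c)
    (hx : x ∈ acceptanceSet μ Λ X) :
    x + c ∈ acceptanceSet μ Λ (fun ω => X ω + c) := by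
  have hsets : {ω | X ω + c ≤ x + c} = {ω | X ω ≤ x} := by simp
  simp only [acceptanceSet, Set.mem_ofPred_eq, hsets]
  exact (hΛ (le_add_of_nonneg_right hc)).trans hx

theorem LVaR_add_le (hΛ : Antitone Λ) {c : ℝ} (hc : 0 ≤ c) (hne : (acceptanceSet μ Λ X).Nonempty)
    (hbdd : BddBelow (acceptanceSet μ Λ (fun ω => X ω + c))) :
    LVaR μ Λ (fun ω => X ω + c) ≤ LVaR μ Λ X + c := by
  rw [LVaR_eq_sInf_acceptanceSet, LVaR_eq_sInf_acceptanceSet, ← sub_le_iff_le_add]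
  exact le_csInf hne fun x hx =>
    sub_le_iff_le_add.2 (csInf_le hbdd (add_mem_acceptanceSet_add hΛ hc hx))

end acceptanceSet

theorem LVaR_cashSubadditive_general (μ : Measure Ω) [IsProbabilityMeasure μ]
    (Λ : ℝ → ℝ) (hΛ : Antitone Λ) (hΛ01 : ∀ x, Λ x ∈ Set.Icc (0 : ℝ) 1)
    (hΛne : ∃ x, Λ x ≠ 0)
    (X : Ω → ℝ) (hb : ∃ M, ∀ ω, |X ω| ≤ M)
    (c : ℝ) (hc : 0 ≤ c) :
    LVaR μ Λ (fun ω => X ω + c) ≤ LVaR μ Λ X + c := by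
  obtain ⟨M, hM⟩ := hb
  obtain ⟨x₀, hx₀⟩ := hΛne
  have hΛx₀ : 0 < Λ x₀ := (hΛ01 x₀).1.lt_of_ne' hx₀
  have hne : (acceptanceSet μ Λ X).Nonempty :=
    ⟨M, mem_acceptanceSet_of_forall_le (fun ω => (abs_le.1 (hM ω)).2) (hΛ01 M).2⟩
  have hbdd : BddBelow (acceptanceSet μ Λ (fun ω => X ω + c)) :=
    bddBelow_acceptanceSet (m := c - M) hΛ hΛx₀ fun ω => by linarith [(abs_le.1 (hM ω)).1]
  exact LVaR_add_le hΛ hc hne hbdd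

/-- For a decreasing `Λ : ℝ → [0,1]` not identically `0`, `ΛVaR` is cash
subadditive: `ΛVaR(X + c) ≤ ΛVaR(X) + c` for all `c ≥ 0` and bounded `X`. -/
theorem LVaR_cashSubadditive (μ : Measure Ω) [IsProbabilityMeasure μ]
    (Λ : ℝ → ℝ) (hΛ : Antitone Λ) (hΛ01 : ∀ x, Λ x ∈ Set.Icc (0 : ℝ) 1)
    (hΛne : ∃ x, Λ x ≠ 0)
    (X : Ω → ℝ) (hX : Measurable X) (hb : ∃ M, ∀ ω, |X ω| ≤ M)
    (c : ℝ) (hc : 0 ≤ c) :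
    LVaR μ Λ (fun ω => X ω + c) ≤ LVaR μ Λ X + c :=
  LVaR_cashSubadditive_general μ Λ hΛ hΛ01 hΛne X hb c hc
end

section
/- For every α ∈ (0,1], every x ∈ ℝ, every bounded X, every t ∈ ℝ and λ ∈ [0,1]: VaR_α((λX + (1−λ)t) ∨ x) ≤ λ VaR_α(X ∨ x) + (1−λ) VaR_α(t ∨ x) ≤ max{VaR_α(X ∨ x), VaR_α(t ∨ x)}. In particular the functional X ↦ VaR_α(X) ∨ x is quasi-star-shaped. -/
open MeasureTheory

variable {Ω : Type*} [MeasurableSpace Ω]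

/-- Value-at-Risk at level `t ∈ (0,1]`: the left `t`-quantile. -/
noncomputable def VaRr (μ : Measure Ω) (t : ℝ) (X : Ω → ℝ) : ℝ :=
  sInf {y : ℝ | t ≤ (μ {ω | X ω ≤ y}).toReal}

lemma VaRr_set_nonempty (μ : Measure Ω) [IsProbabilityMeasure μ] {α : ℝ} (hα : α ≤ 1)
    {Y : Ω → ℝ} {B : ℝ} (hB : ∀ ω, Y ω ≤ B) :
    {y : ℝ | α ≤ (μ {ω | Y ω ≤ y}).toReal}.Nonempty := by
  refine ⟨B, ?_⟩
  have h : {ω | Y ω ≤ B} = Set.univ := Set.eq_univ_of_forall hB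
  simp [Set.mem_setOf_eq, h, hα]

lemma VaRr_set_bddBelow (μ : Measure Ω) {α : ℝ} (hα : 0 < α)
    {Y : Ω → ℝ} {b : ℝ} (hb : ∀ ω, b ≤ Y ω) :
    BddBelow {y : ℝ | α ≤ (μ {ω | Y ω ≤ y}).toReal} := by
  refine ⟨b, fun y hy => ?_⟩
  by_contra h
  push_neg at h
  have he : {ω | Y ω ≤ y} = ∅ := by
    ext ω
    simp only [Set.mem_setOf_eq, Set.mem_empty_iff_false, iff_false, not_le]
    exact lt_of_lt_of_le h (hb ω)
  rw [Set.mem_setOf_eq, he] at hy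
  simp at hy
  linarith

lemma VaRr_mono (μ : Measure Ω) [IsProbabilityMeasure μ] {α : ℝ}
    (hα : α ∈ Set.Ioc (0 : ℝ) 1)
    {f g : Ω → ℝ} (hfg : ∀ ω, f ω ≤ g ω) {b B : ℝ}
    (hbf : ∀ ω, b ≤ f ω) (hBg : ∀ ω, g ω ≤ B) :
    VaRr μ α f ≤ VaRr μ α g := by
  apply csInf_le_csInf (VaRr_set_bddBelow μ hα.1 hbf) (VaRr_set_nonempty μ hα.2 hBg)
  intro y hy
  simp only [Set.mem_setOf_eq] at hy ⊢
  exact le_trans hy (ENNReal.toReal_mono (measure_ne_top μ _)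
    (measure_mono fun ω h => le_trans (hfg ω) h))

lemma VaRr_affine (μ : Measure Ω) [IsProbabilityMeasure μ] {α : ℝ}
    (hα : α ∈ Set.Ioc (0 : ℝ) 1)
    {Y : Ω → ℝ} {b B : ℝ} (hb : ∀ ω, b ≤ Y ω) (hB : ∀ ω, Y ω ≤ B)
    {l d : ℝ} (hl : 0 < l) :
    VaRr μ α (fun ω => l * Y ω + d) = l * VaRr μ α Y + d := by
  have hiff : ∀ y ω, (l * Y ω + d ≤ y) ↔ (Y ω ≤ (y - d) / l) := by
    intro y ω
    rw [le_div_iff₀ hl]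
    constructor <;> intro h <;> nlinarith
  have hS : {y : ℝ | α ≤ (μ {ω | l * Y ω + d ≤ y}).toReal}
      = (fun y => l * y + d) '' {y : ℝ | α ≤ (μ {ω | Y ω ≤ y}).toReal} := by
    ext y
    simp only [Set.mem_setOf_eq, Set.mem_image]
    constructor
    · intro hy
      refine ⟨(y - d) / l, ?_, by field_simp; ring⟩
      have : {ω | l * Y ω + d ≤ y} = {ω | Y ω ≤ (y - d) / l} := by
        ext ω; exact hiff y ω
      rwa [this] at hy
    · rintro ⟨z, hz, rfl⟩
      have : {ω | l * Y ω + d ≤ l * z + d} = {ω | Y ω ≤ z} := by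
        ext ω
        simp only [Set.mem_setOf_eq]
        constructor <;> intro h <;> nlinarith
      rwa [this]
  have hmono : Monotone (fun y : ℝ => l * y + d) := fun a b hab => by
    simp only
    nlinarith
  have hcont : ContinuousAt (fun y : ℝ => l * y + d)
      (sInf {y : ℝ | α ≤ (μ {ω | Y ω ≤ y}).toReal}) :=
    ((continuous_const.mul continuous_id).add continuous_const).continuousAt
  unfold VaRr
  rw [hS, ← Monotone.map_csInf_of_continuousAt hcont hmono
    (VaRr_set_nonempty μ hα.2 hB) (VaRr_set_bddBelow μ hα.1 hb)]

lemma VaRr_const (μ : Measure Ω) [IsProbabilityMeasure μ] {α : ℝ}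
    (hα : α ∈ Set.Ioc (0 : ℝ) 1) (c : ℝ) :
    VaRr μ α (fun _ : Ω => c) = c := by
  have hS : {y : ℝ | α ≤ (μ {_ω : Ω | c ≤ y}).toReal} = Set.Ici c := by
    ext y
    simp only [Set.mem_setOf_eq, Set.mem_Ici]
    by_cases h : c ≤ y
    · have : {_ω : Ω | c ≤ y} = Set.univ := by simp [h]
      simp [this, h, hα.2]
    · have : {_ω : Ω | c ≤ y} = ∅ := by simp [h]
      simp [this, h]
      linarith [hα.1]
  unfold VaRr
  rw [hS, csInf_Ici]

/-- For `α ∈ (0,1]`, `x ∈ ℝ`, bounded `X`, `t ∈ ℝ` and `λ ∈ [0,1]`: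
`VaR_α((λX+(1−λ)t) ∨ x) ≤ λ VaR_α(X ∨ x) + (1−λ) VaR_α(t ∨ x)
  ≤ max {VaR_α(X ∨ x), VaR_α(t ∨ x)}`,
so `X ↦ VaR_α(X) ∨ x` is quasi-star-shaped. -/
theorem VaR_sup_quasiStarShaped (μ : Measure Ω) [IsProbabilityMeasure μ]
    (α : ℝ) (hα : α ∈ Set.Ioc (0 : ℝ) 1) (x t l : ℝ) (hl : l ∈ Set.Icc (0 : ℝ) 1)
    (X : Ω → ℝ) (hX : Measurable X) (hb : ∃ M, ∀ ω, |X ω| ≤ M) :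
    VaRr μ α (fun ω => max (l * X ω + (1 - l) * t) x)
      ≤ l * VaRr μ α (fun ω => max (X ω) x) + (1 - l) * VaRr μ α (fun _ => max t x) ∧
    l * VaRr μ α (fun ω => max (X ω) x) + (1 - l) * VaRr μ α (fun _ => max t x)
      ≤ max (VaRr μ α (fun ω => max (X ω) x)) (VaRr μ α (fun _ => max t x)) := by
  obtain ⟨M, hM⟩ := hb
  have hconst : VaRr μ α (fun _ : Ω => max t x) = max t x := VaRr_const μ hα _
  constructor
  · rcases hl.1.eq_or_lt with h0 | h0
    · subst h0
      simp
    · -- l > 0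
      have hpt : ∀ ω, max (l * X ω + (1 - l) * t) x
          ≤ l * max (X ω) x + (1 - l) * max t x := by
        intro ω
        apply max_le
        · have h1 : l * X ω ≤ l * max (X ω) x :=
            mul_le_mul_of_nonneg_left (le_max_left _ _) hl.1
          have h2 : (1 - l) * t ≤ (1 - l) * max t x :=
            mul_le_mul_of_nonneg_left (le_max_left _ _) (by linarith [hl.2])
          linarith
        · have h1 : l * x ≤ l * max (X ω) x :=
            mul_le_mul_of_nonneg_left (le_max_right _ _) hl.1
          have h2 : (1 - l) * x ≤ (1 - l) * max t x :=
            mul_le_mul_of_nonneg_left (le_max_right _ _) (by linarith [hl.2])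
          linarith
      have hYlb : ∀ ω, x ≤ max (X ω) x := fun ω => le_max_right _ _
      have hYub : ∀ ω, max (X ω) x ≤ max M x := fun ω =>
        max_le_max (le_trans (le_abs_self _) (hM ω)) le_rfl
      have hmono := VaRr_mono μ hα hpt
        (b := x) (B := l * max M x + (1 - l) * max t x)
        (fun ω => le_max_right _ _)
        (fun ω => by
          have := hYub ω
          have h2 : l * max (X ω) x ≤ l * max M x :=
            mul_le_mul_of_nonneg_left (hYub ω) hl.1
          linarith)
      have haff := VaRr_affine μ hα hYlb hYub (d := (1 - l) * max t x) h0
      rw [hconst]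
      calc VaRr μ α (fun ω => max (l * X ω + (1 - l) * t) x)
          ≤ VaRr μ α (fun ω => l * max (X ω) x + (1 - l) * max t x) := hmono
        _ = l * VaRr μ α (fun ω => max (X ω) x) + (1 - l) * max t x := haff
  · set a := VaRr μ α (fun ω => max (X ω) x)
    set c := VaRr μ α (fun _ : Ω => max t x)
    have h1 : l * a ≤ l * max a c := mul_le_mul_of_nonneg_left (le_max_left _ _) hl.1
    have h2 : (1 - l) * c ≤ (1 - l) * max a c :=
      mul_le_mul_of_nonneg_left (le_max_right _ _) (by linarith [hl.2])
    have h3 : l * max a c + (1 - l) * max a c = max a c := by ring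
    linarith
end

section
/- Let ρ : X → ℝ be a normalized, quasi-star-shaped, cash-subadditive risk measure. Suppose for each X ∈ X there exists a family C_X of convex monetary risk measures with ρ(X) = min_{ψ ∈ C_X} ψ(X) and C_{X1} ⊆ C_{X2} whenever X1 ≤ X2. Conversely, if ρ(X+m) = min_{ψ ∈ C_{X+m}} ψ(X+m) with such monotone families of cash-additive ψ, then ρ is cash subadditive: ρ(X+m) ≤ ρ(X)+m for all m ≥ 0. -/
open MeasureTheory

variable {Ω : Type*} [MeasurableSpace Ω]

/-- If for each `X` there is a family `C X` of monetary (monotone and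
cash-additive) risk measures with `ρ(X) = min_{ψ ∈ C X} ψ(X)`, and the families
are monotone (`C X₁ ⊆ C X₂` whenever `X₁ ≤ X₂`), then `ρ` is cash subadditive. -/
theorem monotoneFamily_implies_cashSubadditive (μ : Measure Ω) [IsProbabilityMeasure μ]
    (ρ : Lp ℝ ⊤ μ → ℝ) (C : Lp ℝ ⊤ μ → Set ((Lp ℝ ⊤ μ) → ℝ))
    (hmem : ∀ X : Lp ℝ ⊤ μ, ∀ ψ ∈ C X,
      (∀ U V : Lp ℝ ⊤ μ, U ≤ V → ψ U ≤ ψ V) ∧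
      (∀ (U : Lp ℝ ⊤ μ) (m : ℝ), ψ (U + cst μ m) = ψ U + m))
    (hmin : ∀ X : Lp ℝ ⊤ μ, IsLeast {r : ℝ | ∃ ψ ∈ C X, r = ψ X} (ρ X))
    (hmonoC : ∀ X₁ X₂ : Lp ℝ ⊤ μ, X₁ ≤ X₂ → C X₁ ⊆ C X₂) :
    ∀ (X : Lp ℝ ⊤ μ) (m : ℝ), 0 ≤ m → ρ (X + cst μ m) ≤ ρ X + m := by
  intro X m hm
  have hXle : X ≤ X + cst μ m := by
    have h0 : (0 : Lp ℝ ⊤ μ) ≤ cst μ m := by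
      rw [← Lp.coeFn_le]
      filter_upwards [Lp.coeFn_const (E := ℝ) ⊤ μ m, Lp.coeFn_zero ℝ ⊤ μ] with ω h1 h2
      simp only [cst, h1, h2, Pi.zero_apply, Function.const_apply]
      exact hm
    calc X = X + 0 := (add_zero X).symm
    _ ≤ X + cst μ m := add_le_add_right h0 X
  obtain ⟨⟨ψ, hψC, hψX⟩, hlb⟩ := hmin X
  have hψC' : ψ ∈ C (X + cst μ m) := hmonoC X (X + cst μ m) hXle hψC
  have hle := (hmin (X + cst μ m)).2 ⟨ψ, hψC', rfl⟩
  calc ρ (X + cst μ m) ≤ ψ (X + cst μ m) := hle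
  _ = ψ X + m := (hmem X ψ hψC).2 X m
  _ = ρ X + m := by rw [← hψX]
end

section
/- Define Λ(x) = 1 for x ≤ 1 and Λ(x) = 0 for x > 1. Then ΛVaR(c) = min(c, 1) for every constant c ∈ ℝ, and ΛVaR is not star-shaped: ΛVaR(1) = 1 > (1/2)ΛVaR(2) + (1/2)ΛVaR(0) = 1/2. -/
open MeasureTheory

variable {Ω : Type*} [MeasurableSpace Ω]

/-! A constant `c` has distribution function `x ↦ 1_{c ≤ x}`, so for the step
`Λ = 1_{x ≤ a}` the set defining `ΛVaR(c)` is `[c, ∞) ∪ (a, ∞)`, whose infimum is `min c a`. -/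

lemma measure_setOf_const_toReal (μ : Measure Ω) [IsProbabilityMeasure μ] (p : Prop)
    [Decidable p] : (μ {_ω | p}).toReal = if p then 1 else 0 := by
  by_cases hp : p <;> simp [hp]

lemma LVaR_const (μ : Measure Ω) [IsProbabilityMeasure μ] (Λ : ℝ → ℝ) (c : ℝ) :
    LVaR μ Λ (fun _ => c) = sInf {x | Λ x ≤ if c ≤ x then 1 else 0} := by
  simp only [LVaR, measure_setOf_const_toReal]

lemma LVaR_step_const (μ : Measure Ω) [IsProbabilityMeasure μ] (a c : ℝ) :
    LVaR μ (fun x => if x ≤ a then 1 else 0) (fun _ => c) = min c a := by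
  have hset : {x : ℝ | (if x ≤ a then (1 : ℝ) else 0) ≤ if c ≤ x then 1 else 0}
      = Set.Ici c ∪ Set.Ioi a := by
    ext x
    simp only [Set.mem_ofPred_eq, Set.mem_union, Set.mem_Ici, Set.mem_Ioi]
    split_ifs <;> grind
  rw [LVaR_const, hset]
  exact (isGLB_Ici.union isGLB_Ioi).csInf_eq ⟨c, Or.inl Set.self_mem_Ici⟩

/-- For `Λ(x) = 1_{x ≤ 1}`: `ΛVaR(c) = min(c,1)` for every constant `c`, and
`ΛVaR` is not star-shaped since
`ΛVaR(1) = 1 > 1/2 = (1/2)ΛVaR(2) + (1/2)ΛVaR(0)`. -/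
theorem LVaR_not_starShaped (μ : Measure Ω) [IsProbabilityMeasure μ] :
    (∀ c : ℝ,
      LVaR μ (fun x => if x ≤ 1 then (1 : ℝ) else 0) (fun _ : Ω => c) = min c 1) ∧
    LVaR μ (fun x => if x ≤ 1 then (1 : ℝ) else 0) (fun _ : Ω => (1 : ℝ)) = 1 ∧
    (1 / 2) * LVaR μ (fun x => if x ≤ 1 then (1 : ℝ) else 0) (fun _ : Ω => (2 : ℝ))
      + (1 / 2) * LVaR μ (fun x => if x ≤ 1 then (1 : ℝ) else 0) (fun _ : Ω => (0 : ℝ))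
      = 1 / 2 ∧
    (1 : ℝ) > 1 / 2 := by
  simp only [LVaR_step_const]
  norm_num
end
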